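/- The type inference algorithm always returns types in normal form: if WK(K, Γ, M) = (K', S, τ), then τ is in normal form with respect to the type reduction system on extensible types. -/

import Mathlib

namespace ExtRec

abbrev Label := ℕ
abbrev TyVar := ℕ

-- Types of the extensible record calculus (mutually with field lists of records).
mutual
inductive Ty where
  | base : ℕ → Ty
  | var : TyVar → Ty
  | arrow : Ty → Ty → Ty
  | rcd : Flds → Ty
  | ext : Ty → Label → Ty → Ty   -- τ + {ℓ : τ'}
  | cont : Ty → Label → Ty → Ty  -- τ − {ℓ : τ'}
inductive Flds where
  | nil : Flds
  | cons : Label → Ty → Flds → Flds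
end

abbrev Fields := List (Label × Ty)

def Flds.toList : Flds → Fields
  | .nil => []
  | .cons l t F => (l, t) :: F.toList

def Flds.ofList : Fields → Flds
  | [] => .nil
  | (l, t) :: F => .cons l t (Flds.ofList F)

/-- Record type built from a field list. -/
def Ty.record (F : Fields) : Ty := .rcd (Flds.ofList F)

/-- Kinds: the universal kind, or a record kind ⟨⟨Fl ∣∣ Fr⟩⟩ with required fields Fl
and forbidden fields Fr. -/
inductive Kind where
  | univ : Kind
  | rcd : Fields → Fields → Kind

abbrev KEnv := TyVar → Option Kind
abbrev Subst := TyVar → Ty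
/-- A polytype ∀α₁::k₁ ⋯ ∀αₙ::kₙ. τ. -/
abbrev Scheme := List (TyVar × Kind) × Ty

def labels (F : Fields) : List Label := F.map Prod.fst

mutual
def Ty.ftv : Ty → Finset TyVar
  | .base _ => ∅
  | .var a => {a}
  | .arrow t u => t.ftv ∪ u.ftv
  | .rcd F => Flds.ftv F
  | .ext t _ u => t.ftv ∪ u.ftv
  | .cont t _ u => t.ftv ∪ u.ftv
def Flds.ftv : Flds → Finset TyVar
  | .nil => ∅
  | .cons _ t F => t.ftv ∪ Flds.ftv F
end

def fieldsFtv (F : Fields) : Finset TyVar := F.foldr (fun p s => p.2.ftv ∪ s) ∅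

def Kind.ftv : Kind → Finset TyVar
  | .univ => ∅
  | .rcd Fl Fr => fieldsFtv Fl ∪ fieldsFtv Fr

/-- Free type variables of a polytype: ∀α::k.σ binds α in σ but not in k. -/
def schemeFtv : Scheme → Finset TyVar
  | (qs, τ) => qs.foldr (fun p s => p.2.ftv ∪ (s \ {p.1})) τ.ftv

def KEnv.dom (K : KEnv) : Set TyVar := {a | (K a).isSome}

def WfTy (K : KEnv) (τ : Ty) : Prop := ↑τ.ftv ⊆ K.dom
def WfKind (K : KEnv) (k : Kind) : Prop := ↑k.ftv ⊆ K.dom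
def WfScheme (K : KEnv) (σ : Scheme) : Prop := ↑(schemeFtv σ) ⊆ K.dom
/-- A kind assignment is well formed if the kinds it assigns only mention
variables in its domain. -/
def WfKEnv (K : KEnv) : Prop := ∀ a k, K a = some k → WfKind K k

mutual
def applyTy (S : Subst) : Ty → Ty
  | .base b => .base b
  | .var a => S a
  | .arrow t u => .arrow (applyTy S t) (applyTy S u)
  | .rcd F => .rcd (applyFlds S F)
  | .ext t l u => .ext (applyTy S t) l (applyTy S u)
  | .cont t l u => .cont (applyTy S t) l (applyTy S u)
def applyFlds (S : Subst) : Flds → Flds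
  | .nil => .nil
  | .cons l t F => .cons l (applyTy S t) (applyFlds S F)
end

def applyFields (S : Subst) (F : Fields) : Fields := F.map (fun p => (p.1, applyTy S p.2))

def applyKind (S : Subst) : Kind → Kind
  | .univ => .univ
  | .rcd Fl Fr => .rcd (applyFields S Fl) (applyFields S Fr)

/-- S(∀α::k.σ) = ∀α::S(k).S(σ) (bound variables assumed fresh). -/
def applyScheme (S : Subst) (σ : Scheme) : Scheme :=
  (σ.1.map fun p => (p.1, applyKind S p.2), applyTy S σ.2)

/-- Composition of substitutions: (S₂ ∘ S₁)(α) = S₂(S₁(α)). -/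
def comp (S2 S1 : Subst) : Subst := fun a => applyTy S2 (S1 a)

def idS : Subst := Ty.var

/-- The kinding judgment K ⊩ τ :: k. -/
inductive HasKind : KEnv → Ty → Kind → Prop
  | univ {K : KEnv} {τ : Ty} : WfTy K τ → HasKind K τ .univ
  | rcd {K : KEnv} {F Fl Fr : Fields} :
      (∀ p ∈ Fl, p ∈ F) →
      (∀ l ∈ labels F, l ∉ labels Fr) →
      WfTy K (Ty.record F) → (∀ p ∈ Fr, WfTy K p.2) →
      HasKind K (Ty.record F) (.rcd Fl Fr)
  | var {K : KEnv} {a : TyVar} {Fl Fr Fl' Fr' : Fields} :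
      K a = some (.rcd Fl' Fr') →
      (∀ p ∈ Fl, p ∈ Fl') → (∀ p ∈ Fr, p ∈ Fr') →
      HasKind K (.var a) (.rcd Fl Fr)
  | ext {K : KEnv} {χ τ : Ty} {l : Label} {Fl Fr : Fields} (opt : Bool) :
      HasKind K χ (.rcd Fl ((l, τ) :: Fr)) →
      HasKind K (.ext χ l τ) (.rcd (if opt then (l, τ) :: Fl else Fl) Fr)
  | cont {K : KEnv} {χ τ : Ty} {l : Label} {Fl Fr : Fields} (opt : Bool) :
      HasKind K χ (.rcd ((l, τ) :: Fl) Fr) →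
      HasKind K (.cont χ l τ) (.rcd Fl (if opt then (l, τ) :: Fr else Fr))

/-- (K₁, S) respects K. -/
def Respects (K1 : KEnv) (S : Subst) (K : KEnv) : Prop :=
  ∀ a k, K a = some k → HasKind K1 (S a) (applyKind S k)

/-- Extend a kind assignment by a list of kinded variables. -/
def extendK (K : KEnv) (qs : List (TyVar × Kind)) : KEnv :=
  fun a => match qs.lookup a with
    | some k => some k
    | none => K a

/-- K ⊩ σ₁ ≥ σ₂ : σ₂ is a generic instance of σ₁ under K. -/
def GenInst (K : KEnv) (σ1 σ2 : Scheme) : Prop :=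
  ∃ S : Subst,
    (∀ a, a ∉ σ1.1.map Prod.fst → S a = .var a) ∧
    Respects (extendK K σ2.1) S (extendK K σ1.1) ∧
    applyTy S σ1.2 = σ2.2

def mono (τ : Ty) : Scheme := ([], τ)

/-! ### The type reduction system on extensible types -/

/-- An operation: `(true, ℓ, τ)` is the extension +{ℓ:τ}, `(false, ℓ, τ)` the contraction −{ℓ:τ}. -/
abbrev Op := Bool × Label × Ty

def applyOps (t : Ty) (ops : List Op) : Ty :=
  ops.foldl (fun t p => if p.1 then .ext t p.2.1 p.2.2 else .cont t p.2.1 p.2.2) t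

/-- The rewrite relation ⟶ on (extensible) types, closed under congruence. -/
inductive Red : Ty → Ty → Prop
  | contFold {F1 F2 : Fields} {l : Label} {τ : Ty} {ops : List Op} :
      Red (applyOps (.cont (Ty.record (F1 ++ (l, τ) :: F2)) l τ) ops)
          (applyOps (Ty.record (F1 ++ F2)) ops)
  | extFold {F : Fields} {l : Label} {τ : Ty} {ops : List Op} :
      l ∉ labels F →
      Red (applyOps (.ext (Ty.record F) l τ) ops)
          (applyOps (Ty.record ((l, τ) :: F)) ops)
  | cancelCE {a : TyVar} {l : Label} {τ : Ty} {pre mid post : List Op} :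
      l ∉ mid.map (fun p => p.2.1) →
      Red (applyOps (.var a) (pre ++ (false, l, τ) :: mid ++ (true, l, τ) :: post))
          (applyOps (.var a) (pre ++ mid ++ post))
  | cancelEC {a : TyVar} {l : Label} {τ : Ty} {pre mid post : List Op} :
      l ∉ mid.map (fun p => p.2.1) →
      Red (applyOps (.var a) (pre ++ (true, l, τ) :: mid ++ (false, l, τ) :: post))
          (applyOps (.var a) (pre ++ mid ++ post))
  | arrowL {t t' u : Ty} : Red t t' → Red (.arrow t u) (.arrow t' u)
  | arrowR {t u u' : Ty} : Red u u' → Red (.arrow t u) (.arrow t u')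
  | rcdField {F1 F2 : Fields} {l : Label} {t t' : Ty} :
      Red t t' → Red (Ty.record (F1 ++ (l, t) :: F2)) (Ty.record (F1 ++ (l, t') :: F2))
  | extBase {t t' u : Ty} {l : Label} : Red t t' → Red (.ext t l u) (.ext t' l u)
  | extField {t u u' : Ty} {l : Label} : Red u u' → Red (.ext t l u) (.ext t l u')
  | contBase {t t' u : Ty} {l : Label} : Red t t' → Red (.cont t l u) (.cont t' l u)
  | contField {t u u' : Ty} {l : Label} : Red u u' → Red (.cont t l u) (.cont t l u')

/-- τ is in normal form. -/
def NF (τ : Ty) : Prop := ∀ u, ¬ Red τ u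

/-- τ normalizes to u. -/
def NormTo (τ u : Ty) : Prop := Relation.ReflTransGen Red τ u ∧ NF u

open Classical in
/-- ⇓τ : the normal form of τ (well defined since ⟶ is convergent). -/
noncomputable def norm (τ : Ty) : Ty :=
  if h : ∃ u, NormTo τ u then h.choose else τ

/-- Equality of substitutions up to normalization. -/
def SubstEq (S1 S2 : Subst) : Prop := ∀ τ : Ty, norm (applyTy S1 τ) = norm (applyTy S2 τ)

/-- Number of occurrences of a label along the spine of an extensible type
(base record fields plus extension/contraction operations). -/
def countLabel : Ty → Label → ℕ
  | .rcd F, l => (F.toList.filter (fun p => p.1 = l)).length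
  | .ext t l' _, l => countLabel t l + (if l' = l then 1 else 0)
  | .cont t l' _, l => countLabel t l + (if l' = l then 1 else 0)
  | _, _ => 0

/-- The base of an extensible type. -/
def baseOf : Ty → Ty
  | .ext t _ _ => baseOf t
  | .cont t _ _ => baseOf t
  | t => t

noncomputable def normKind (k : Kind) : Kind :=
  match k with
  | .univ => .univ
  | .rcd Fl Fr => .rcd (Fl.map fun p => (p.1, norm p.2)) (Fr.map fun p => (p.1, norm p.2))

noncomputable def normScheme (σ : Scheme) : Scheme :=
  (σ.1.map fun p => (p.1, normKind p.2), norm σ.2)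

/-! ### Terms and the typing judgment -/

mutual
inductive Tm where
  | var : ℕ → Tm
  | const : ℕ → ℕ → Tm            -- constant k^b of base type b
  | abs : ℕ → Tm → Tm
  | app : Tm → Tm → Tm
  | letin : ℕ → Tm → Tm → Tm
  | rcd : TmFlds → Tm
  | sel : Tm → Label → Tm
  | modif : Tm → Label → Tm → Tm
  | contr : Tm → Label → Tm       -- M \ ℓ
  | ext : Tm → Label → Tm → Tm    -- extend(M, ℓ, N)
inductive TmFlds where
  | nil : TmFlds
  | cons : Label → Tm → TmFlds → TmFlds
end

def TmFlds.toList : TmFlds → List (Label × Tm)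
  | .nil => []
  | .cons l m F => (l, m) :: F.toList

abbrev TEnv := ℕ → Option Scheme

def WfTEnv (K : KEnv) (Γ : TEnv) : Prop := ∀ x σ, Γ x = some σ → WfScheme K σ

def updT (Γ : TEnv) (x : ℕ) (σ : Scheme) : TEnv := fun y => if y = x then some σ else Γ y

def applyTEnv (S : Subst) (Γ : TEnv) : TEnv := fun x => (Γ x).map (applyScheme S)

/-- Membership in EFTV(K, s): the least set containing s and closed under
adding free variables of kinds of its members. -/
inductive InEFTV (K : KEnv) (s : Finset TyVar) : TyVar → Prop
  | base {a : TyVar} : a ∈ s → InEFTV K s a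
  | step {a b : TyVar} {k : Kind} : InEFTV K s a → K a = some k → b ∈ k.ftv → InEFTV K s b

def EFTV (K : KEnv) (s : Finset TyVar) : Set TyVar := {a | InEFTV K s a}

def EFTVenv (K : KEnv) (Γ : TEnv) : Set TyVar :=
  {a | ∃ x σ, Γ x = some σ ∧ InEFTV K (schemeFtv σ) a}

/-- Cls(K, Γ, τ) = (K', σ) : the closure of τ under Γ, K. -/
def Cls (K : KEnv) (Γ : TEnv) (τ : Ty) (K' : KEnv) (σ : Scheme) : Prop :=
  ∃ qs : List (TyVar × Kind),
    σ = (qs, τ) ∧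
    (∀ p ∈ qs, K p.1 = some p.2) ∧
    (qs.map Prod.fst).Nodup ∧
    {a | a ∈ qs.map Prod.fst} = EFTV K τ.ftv \ EFTVenv K Γ ∧
    K' = fun a => if a ∈ qs.map Prod.fst then none else K a

/-- The typing judgment K, Γ ⊢ M : σ. -/
inductive Typing : KEnv → TEnv → Tm → Scheme → Prop
  | var {K Γ x σ τ} :
      WfTEnv K Γ → Γ x = some σ → GenInst K σ (mono τ) →
      Typing K Γ (.var x) (mono τ)
  | const {K Γ c b} :
      WfTEnv K Γ → Typing K Γ (.const c b) (mono (.base b))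
  | abs {K Γ x M τ1 τ2} :
      Typing K (updT Γ x (mono τ1)) M (mono τ2) →
      Typing K Γ (.abs x M) (mono (.arrow τ1 τ2))
  | app {K Γ M1 M2 τ1 τ2} :
      Typing K Γ M1 (mono (.arrow τ1 τ2)) → Typing K Γ M2 (mono τ1) →
      Typing K Γ (.app M1 M2) (mono τ2)
  | letin {K Γ x M1 M2 σ τ} :
      Typing K Γ M1 σ → Typing K (updT Γ x σ) M2 (mono τ) →
      Typing K Γ (.letin x M1 M2) (mono τ)
  | rcd {K Γ} {Ms : List (Label × Tm)} {Fs : Fields} :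
      labels Fs = Ms.map Prod.fst →
      Ms.length = Fs.length →
      (∀ i (h1 : i < Ms.length) (h2 : i < Fs.length),
        Typing K Γ (Ms.get ⟨i, h1⟩).2 (mono (Fs.get ⟨i, h2⟩).2)) →
      Typing K Γ (.rcd (Ms.foldr (fun p F => TmFlds.cons p.1 p.2 F) .nil)) (mono (Ty.record Fs))
  | sel {K Γ M l τ1 τ2} :
      Typing K Γ M (mono τ1) → HasKind K τ1 (.rcd [(l, τ2)] []) →
      Typing K Γ (.sel M l) (mono τ2)
  | modif {K Γ M1 M2 l τ1 τ2} :
      Typing K Γ M1 (mono τ1) → Typing K Γ M2 (mono τ2) →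
      HasKind K τ1 (.rcd [(l, τ2)] []) →
      Typing K Γ (.modif M1 l M2) (mono τ1)
  | gen {K K' Γ M τ σ} :
      Typing K Γ M (mono τ) → Cls K Γ τ K' σ →
      Typing K' Γ M σ
  | contr {K Γ M l τ1 τ2} :
      Typing K Γ M (mono τ1) → HasKind K τ1 (.rcd [(l, τ2)] []) →
      Typing K Γ (.contr M l) (mono (.cont τ1 l τ2))
  | ext {K Γ M1 M2 l τ1 τ2} :
      Typing K Γ M1 (mono τ1) → Typing K Γ M2 (mono τ2) →
      HasKind K τ1 (.rcd [] [(l, τ2)]) →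
      (∀ a, baseOf τ1 = .var a → a ∉ τ2.ftv) →
      Typing K Γ (.ext M1 l M2) (mono (.ext τ1 l τ2))

/-! ### Kinded unification -/

def single (a : TyVar) (t : Ty) : Subst := fun b => if b = a then t else .var b

def mapEq (S : Subst) (E : List (Ty × Ty)) : List (Ty × Ty) :=
  E.map (fun p => (applyTy S p.1, applyTy S p.2))

def updS (S : Subst) (a : TyVar) (t : Ty) : Subst :=
  fun b => if b = a then t else applyTy (single a t) (S b)

def elimK (K : KEnv) (a : TyVar) (t : Ty) : KEnv :=
  fun b => if b = a then none else (K b).map (applyKind (single a t))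

def updSK (SK : KEnv) (a : TyVar) (t : Ty) (k : Kind) : KEnv :=
  fun b => if b = a then some k else (SK b).map (applyKind (single a t))

/-- F₁ + F₂ on field sets (left-biased union). -/
def fAdd (F1 F2 : Fields) : Fields := F1 ++ F2.filter (fun p => decide (p.1 ∉ labels F1))

/-- F₁ − F₂ on field sets. -/
def fSub (F1 F2 : Fields) : Fields := F1.filter (fun p => decide (p.1 ∉ labels F2))

/-- Equations between the types of common labels of two field sets. -/
def matchEqs (F1 F2 : Fields) : List (Ty × Ty) :=
  F1.filterMap (fun p => (List.lookup p.1 F2).map (fun t => (p.2, t)))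

/-- The type extensions of an extensible type. -/
def efieldsL : Ty → Fields
  | .ext t l τ => (l, τ) :: efieldsL t
  | .cont t _ _ => efieldsL t
  | _ => []

/-- The type contractions of an extensible type. -/
def cfieldsL : Ty → Fields
  | .cont t l τ => (l, τ) :: cfieldsL t
  | .ext t _ _ => cfieldsL t
  | _ => []

def IsOpTy : Ty → Prop
  | .ext _ _ _ => True
  | .cont _ _ _ => True
  | _ => False

def sixSub (a1 a2 c : TyVar) (ops1 ops2 : List Op) : Subst :=
  fun b => if b = a1 then applyOps (.var c) ops2
           else if b = a2 then applyOps (.var c) ops1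
           else .var b

/-- Configurations of the unification algorithm: (E, K, S, SK). -/
abbrev Config := List (Ty × Ty) × KEnv × Subst × KEnv

/-- The transformation rules of the kinded unification algorithm 𝒰. -/
inductive UStep : Config → Config → Prop
  | triv {E1 E2 K S SK τ1 τ2} :
      norm τ1 = norm τ2 →
      UStep (E1 ++ (τ1, τ2) :: E2, K, S, SK) (E1 ++ E2, K, S, SK)
  | varUniv {E1 E2 K S SK} {a : TyVar} {τ : Ty} :
      K a = some .univ → a ∉ τ.ftv →
      UStep (E1 ++ (.var a, τ) :: E2, K, S, SK)
        (mapEq (single a τ) (E1 ++ E2), elimK K a τ, updS S a τ, updSK SK a τ .univ)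
  | varVar {E1 E2 K S SK} {a1 a2 : TyVar} {Fl1 Fr1 Fl2 Fr2 : Fields} :
      K a1 = some (.rcd Fl1 Fr1) → K a2 = some (.rcd Fl2 Fr2) → a1 ≠ a2 →
      (∀ l ∈ labels Fl1, l ∉ labels Fr2) → (∀ l ∈ labels Fr1, l ∉ labels Fl2) →
      UStep (E1 ++ (.var a1, .var a2) :: E2, K, S, SK)
        (mapEq (single a1 (.var a2)) (E1 ++ E2 ++ matchEqs Fl1 Fl2 ++ matchEqs Fr1 Fr2),
         fun b => if b = a1 then none
                  else if b = a2 then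
                    some (applyKind (single a1 (.var a2)) (.rcd (fAdd Fl1 Fl2) (fAdd Fr1 Fr2)))
                  else (K b).map (applyKind (single a1 (.var a2))),
         updS S a1 (.var a2), updSK SK a1 (.var a2) (.rcd Fl1 Fr1))
  | varRcd {E1 E2 K S SK} {a : TyVar} {Fl1 Fr1 F2 : Fields} :
      K a = some (.rcd Fl1 Fr1) →
      (∀ l ∈ labels Fl1, l ∈ labels F2) → (∀ l ∈ labels Fr1, l ∉ labels F2) →
      a ∉ (Ty.record F2).ftv →
      UStep (E1 ++ (.var a, Ty.record F2) :: E2, K, S, SK)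
        (mapEq (single a (Ty.record F2)) (E1 ++ E2 ++ matchEqs Fl1 F2),
         elimK K a (Ty.record F2), updS S a (Ty.record F2),
         updSK SK a (Ty.record F2) (.rcd Fl1 Fr1))
  | rcdRcd {E1 E2 K S SK} {F1 F2 : Fields} :
      (∀ l, l ∈ labels F1 ↔ l ∈ labels F2) →
      UStep (E1 ++ (Ty.record F1, Ty.record F2) :: E2, K, S, SK)
        (E1 ++ E2 ++ matchEqs F1 F2, K, S, SK)
  | arrow {E1 E2 K S SK t1 t2 u1 u2} :
      UStep (E1 ++ (.arrow t1 t2, .arrow u1 u2) :: E2, K, S, SK)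
        (E1 ++ E2 ++ [(t1, u1), (t2, u2)], K, S, SK)
  | varExt {E1 E2 K S SK} {a ax : TyVar} {χ : Ty} {Fl1 Fr1 Fl2 Fr2 : Fields} :
      IsOpTy χ → baseOf χ = .var ax →
      K a = some (.rcd Fl1 Fr1) → K ax = some (.rcd Fl2 Fr2) →
      (∀ l ∈ labels Fl1, l ∉ labels (cfieldsL (norm χ))) →
      (∀ l ∈ labels Fr1, l ∉ labels (fAdd Fr2 (fSub Fl2 (cfieldsL (norm χ))))) →
      a ∉ χ.ftv →
      UStep (E1 ++ (.var a, χ) :: E2, K, S, SK)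
        (mapEq (single a χ)
           (E1 ++ E2 ++ matchEqs Fl1 (fAdd Fr2 (fSub Fl2 (cfieldsL (norm χ))))
               ++ matchEqs Fr1 (cfieldsL (norm χ))),
         fun b => if b = a then none
                  else if b = ax then
                    some (applyKind (single a χ)
                      (.rcd (fAdd Fl2 (fSub Fl1 (fAdd Fr2 (fSub Fl2 (cfieldsL (norm χ))))))
                            (fAdd Fr2 (fSub Fr1 (cfieldsL (norm χ))))))
                  else (K b).map (applyKind (single a χ)),
         updS S a χ, updSK SK a χ (.rcd Fl1 Fr1))
  | opMatch {E1 E2 K S SK} {a1 a2 : TyVar} {b : Bool} {l : Label} {τ1 τ2 : Ty}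
      {o1a o1b o2a o2b : List Op} :
      l ∉ o1b.map (fun p => p.2.1) → l ∉ o2b.map (fun p => p.2.1) →
      UStep (E1 ++ (applyOps (.var a1) (o1a ++ (b, l, τ1) :: o1b),
                    applyOps (.var a2) (o2a ++ (b, l, τ2) :: o2b)) :: E2, K, S, SK)
        (E1 ++ E2 ++ [(τ1, τ2),
           (applyOps (.var a1) (o1a ++ o1b), applyOps (.var a2) (o2a ++ o2b))], K, S, SK)
  | opMerge {E1 E2 K S SK} {a1 a2 c : TyVar} {ops1 ops2 : List Op}
      {Fl1 Fr1 Fl2 Fr2 : Fields} :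
      (ops1 ≠ [] ∨ ops2 ≠ []) → a1 ≠ a2 →
      K a1 = some (.rcd Fl1 Fr1) → K a2 = some (.rcd Fl2 Fr2) →
      (∀ l ∈ labels Fl1, l ∉ labels Fr2) → (∀ l ∈ labels Fr1, l ∉ labels Fl2) →
      (∀ p ∈ ops1, ∀ q ∈ ops2, p.2.1 ≠ q.2.1) →
      a1 ∉ (applyOps (.var a2) ops2).ftv → a2 ∉ (applyOps (.var a1) ops1).ftv →
      K c = none → c ≠ a1 → c ≠ a2 →
      UStep (E1 ++ (applyOps (.var a1) ops1, applyOps (.var a2) ops2) :: E2, K, S, SK)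
        (mapEq (sixSub a1 a2 c ops1 ops2) (E1 ++ E2 ++ matchEqs Fl1 Fl2 ++ matchEqs Fr1 Fr2),
         fun b => if b = a1 ∨ b = a2 then none
                  else if b = c then
                    some (applyKind (sixSub a1 a2 c ops1 ops2) (.rcd (fAdd Fl1 Fl2) (fAdd Fr1 Fr2)))
                  else (K b).map (applyKind (sixSub a1 a2 c ops1 ops2)),
         fun b => if b = a1 then applyOps (.var c) ops2
                  else if b = a2 then applyOps (.var c) ops1
                  else applyTy (sixSub a1 a2 c ops1 ops2) (S b),
         fun b => if b = a1 then some (Kind.rcd Fl1 Fr1)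
                  else if b = a2 then some (Kind.rcd Fl2 Fr2)
                  else (SK b).map (applyKind (sixSub a1 a2 c ops1 ops2)))

def initConfig (K : KEnv) (E : List (Ty × Ty)) : Config := (E, K, idS, fun _ => none)

/-- 𝒰(K, E) succeeds with result (K₁, S). -/
def UComputes (K : KEnv) (E : List (Ty × Ty)) (K1 : KEnv) (S : Subst) : Prop :=
  ∃ SK, Relation.ReflTransGen UStep (initConfig K E) ([], K1, S, SK)

/-- 𝒰(K, E) fails: every terminal configuration reachable from the initial one
still has unsolved equations. -/
def UFails (K : KEnv) (E : List (Ty × Ty)) : Prop :=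
  ∀ c, Relation.ReflTransGen UStep (initConfig K E) c →
    (∀ c', ¬ UStep c c') → c.1 ≠ []

def Satisfies (S : Subst) (E : List (Ty × Ty)) : Prop :=
  ∀ p ∈ E, norm (applyTy S p.1) = norm (applyTy S p.2)

/-- (K₁, S) is a unifier of the kinded set of equations (K, E). -/
def Unifier (K1 : KEnv) (S : Subst) (K : KEnv) (E : List (Ty × Ty)) : Prop :=
  Respects K1 S K ∧ Satisfies S E

/-- (K₁, S) is a most general unifier of (K, E). -/
def MGU (K1 : KEnv) (S : Subst) (K : KEnv) (E : List (Ty × Ty)) : Prop :=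
  Unifier K1 S K E ∧
  ∀ K3 S2, Unifier K3 S2 K E →
    ∃ S3, Respects K3 S3 K1 ∧ SubstEq S2 (comp S3 S)

/-! ### The type inference algorithm WK -/

mutual
/-- The type inference algorithm: `Infer K Γ M K' S τ` means WK(K, Γ, M) = (K', S, τ). -/
inductive Infer : KEnv → TEnv → Tm → KEnv → Subst → Ty → Prop
  | var {K : KEnv} {Γ : TEnv} {x : ℕ} {qs : List (TyVar × Kind)} {τ : Ty}
      {bs : List TyVar} {S : Subst} :
      Γ x = some (qs, τ) →
      bs.Nodup → (∀ b ∈ bs, K b = none) → bs.length = qs.length →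
      (∀ i (h1 : i < qs.length) (h2 : i < bs.length),
        S (qs.get ⟨i, h1⟩).1 = .var (bs.get ⟨i, h2⟩)) →
      (∀ a, a ∉ qs.map Prod.fst → S a = .var a) →
      Infer K Γ (.var x)
        (extendK K (List.zipWith (fun b (p : TyVar × Kind) => (b, applyKind S p.2)) bs qs))
        idS (norm (applyTy S τ))
  | abs {K Γ x M K1 S1 τ1} {a : TyVar} :
      K a = none →
      Infer (extendK K [(a, .univ)]) (updT Γ x (mono (.var a))) M K1 S1 τ1 →
      Infer K Γ (.abs x M) K1 S1 (.arrow (norm (applyTy S1 (.var a))) τ1)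
  | app {K Γ M1 M2 K1 S1 τ1 K2 S2 τ2 K3 S3} {a : TyVar} :
      Infer K Γ M1 K1 S1 τ1 →
      Infer K1 (applyTEnv S1 Γ) M2 K2 S2 τ2 →
      K2 a = none →
      UComputes (extendK K2 [(a, .univ)]) [(applyTy S2 τ1, .arrow τ2 (.var a))] K3 S3 →
      Infer K Γ (.app M1 M2) K3 (comp S3 (comp S2 S1)) (norm (applyTy S3 (.var a)))
  | letin {K Γ x M1 M2 K1 S1 τ1 K1' σ K2 S2 τ2} :
      Infer K Γ M1 K1 S1 τ1 →
      Cls K1 (applyTEnv S1 Γ) τ1 K1' σ →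
      Infer K1' (updT (applyTEnv S1 Γ) x σ) M2 K2 S2 τ2 →
      Infer K Γ (.letin x M1 M2) K2 (comp S2 S1) τ2
  | rcd {K Γ Ms K' S Fs} :
      InferList K Γ Ms K' S Fs →
      Infer K Γ (.rcd Ms) K' S (Ty.record Fs)
  | sel {K Γ M l K1 S1 τ1 K2 S2} {a1 a2 : TyVar} :
      Infer K Γ M K1 S1 τ1 →
      K1 a1 = none → K1 a2 = none → a1 ≠ a2 →
      UComputes (extendK K1 [(a1, .univ), (a2, .rcd [(l, .var a1)] [])])
        [(.var a2, τ1)] K2 S2 →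
      Infer K Γ (.sel M l) K2 (comp S2 S1) (norm (applyTy S2 (.var a1)))
  | modif {K Γ M1 M2 l K1 S1 τ1 K2 S2 τ2 K3 S3} {a1 a2 : TyVar} :
      Infer K Γ M1 K1 S1 τ1 →
      Infer K1 (applyTEnv S1 Γ) M2 K2 S2 τ2 →
      K2 a1 = none → K2 a2 = none → a1 ≠ a2 →
      UComputes (extendK K2 [(a1, .univ), (a2, .rcd [(l, .var a1)] [])])
        [(.var a1, τ2), (.var a2, applyTy S2 τ1)] K3 S3 →
      Infer K Γ (.modif M1 l M2) K3 (comp S3 (comp S2 S1)) (norm (applyTy S3 (.var a2)))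
  | contr {K Γ M l K1 S1 τ1 K2 S2} {a1 a2 : TyVar} :
      Infer K Γ M K1 S1 τ1 →
      K1 a1 = none → K1 a2 = none → a1 ≠ a2 →
      UComputes (extendK K1 [(a1, .univ), (a2, .rcd [(l, .var a1)] [])])
        [(.var a2, τ1)] K2 S2 →
      Infer K Γ (.contr M l) K2 (comp S2 S1)
        (norm (applyTy S2 (.cont (.var a2) l (.var a1))))
  | extend {K Γ M1 M2 l K1 S1 τ1 K2 S2 τ2 K3 S3} {a1 a2 : TyVar} :
      Infer K Γ M1 K1 S1 τ1 →
      Infer K1 (applyTEnv S1 Γ) M2 K2 S2 τ2 →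
      (∀ a, baseOf τ1 = .var a → a ∉ τ2.ftv) →
      K2 a1 = none → K2 a2 = none → a1 ≠ a2 →
      UComputes (extendK K2 [(a1, .univ), (a2, .rcd [] [(l, .var a1)])])
        [(.var a1, τ2), (.var a2, applyTy S2 τ1)] K3 S3 →
      Infer K Γ (.ext M1 l M2) K3 (comp S3 (comp S2 S1))
        (norm (applyTy S3 (.ext (.var a2) l (.var a1))))
/-- Inference for the fields of a record, left to right. -/
inductive InferList : KEnv → TEnv → TmFlds → KEnv → Subst → Fields → Prop
  | nil {K Γ} : InferList K Γ .nil K idS []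
  | cons {K Γ l M Ms K1 S1 τ1 K2 S2 Fs} :
      Infer K Γ M K1 S1 τ1 →
      InferList K1 (applyTEnv S1 Γ) Ms K2 S2 Fs →
      InferList K Γ (.cons l M Ms) K2 (comp S2 S1) ((l, norm (applyTy S2 τ1)) :: Fs)
end

/-
Every reduction step strictly decreases a size measure in which extension and contraction nodes
weigh 2, so `⟶` terminates, every type has a normal form, and `⇓τ` is one. Each clause of WK
returns either some `⇓τ`, the result of a subcall, or an arrow or record type built from such
types, and an arrow or record type can only be rewritten inside one of its components: the other
rules rewrite extension and contraction nodes.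
-/

mutual
def Ty.size : Ty → ℕ
  | .base _ => 1
  | .var _ => 1
  | .arrow t u => t.size + u.size + 1
  | .rcd F => F.size + 1
  | .ext t _ u => t.size + u.size + 2
  | .cont t _ u => t.size + u.size + 2
def Flds.size : Flds → ℕ
  | .nil => 0
  | .cons _ t F => t.size + F.size + 1
end

def fieldsSize (F : Fields) : ℕ := (F.map fun p => p.2.size + 1).sum

def opsSize (ops : List Op) : ℕ := (ops.map fun p => p.2.2.size + 2).sum

lemma Flds.size_ofList (F : Fields) : (Flds.ofList F).size = fieldsSize F := by
  induction F with
  | nil => rfl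
  | cons p F ih =>
    simp only [Flds.ofList, Flds.size, ih, fieldsSize, List.map_cons, List.sum_cons]
    ring

lemma Ty.size_record (F : Fields) : (Ty.record F).size = fieldsSize F + 1 := by
  rw [Ty.record, Ty.size, Flds.size_ofList]

lemma applyOps_append (t : Ty) (ops ops' : List Op) :
    applyOps t (ops ++ ops') = applyOps (applyOps t ops) ops' :=
  List.foldl_append

lemma Ty.size_applyOps (t : Ty) (ops : List Op) :
    (applyOps t ops).size = t.size + opsSize ops := by
  induction ops generalizing t with
  | nil => rfl
  | cons p ops ih =>
    obtain ⟨_ | _, l, u⟩ := p <;>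
    · simp only [applyOps, List.foldl_cons] at ih ⊢
      simp only [ih, opsSize, List.map_cons, List.sum_cons, Ty.size, Bool.false_eq_true,
        if_true, if_false]
      ring

lemma Red.size_lt {t u : Ty} (h : Red t u) : u.size < t.size := by
  induction h with
  | contFold | extFold _ =>
    simp only [Ty.size_applyOps, Ty.size, Ty.size_record, fieldsSize, List.map_append,
      List.sum_append, List.map_cons, List.sum_cons]
    omega
  | cancelCE _ | cancelEC _ =>
    simp only [Ty.size_applyOps, opsSize, List.map_append, List.sum_append, List.map_cons,
      List.sum_cons]
    omega
  | rcdField _ =>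
    simp only [Ty.size_record, fieldsSize, List.map_append, List.sum_append, List.map_cons,
      List.sum_cons]
    omega
  | _ => simp only [Ty.size]; omega

lemma exists_normTo (t : Ty) : ∃ u, NormTo t u := by
  have hwf : WellFounded (flip Red) :=
    Subrelation.wf (fun h => Red.size_lt h) (measure Ty.size).wf
  obtain ⟨u, htu, hmin⟩ := hwf.has_min {u | Relation.ReflTransGen Red t u} ⟨t, .refl⟩
  exact ⟨u, htu, fun v huv => hmin v (htu.tail huv) huv⟩

lemma nf_norm (t : Ty) : NF (norm t) := by
  rw [norm, dif_pos (exists_normTo t)]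
  exact (exists_normTo t).choose_spec.2

lemma Flds.toList_ofList (F : Fields) : (Flds.ofList F).toList = F := by
  induction F with
  | nil => rfl
  | cons p F ih => simp [Flds.ofList, Flds.toList, ih]

lemma Ty.record_injective : Function.Injective Ty.record := fun F F' h => by
  simpa only [Flds.toList_ofList] using congrArg Flds.toList (Ty.rcd.inj h)

def Ty.IsOpNode : Ty → Prop
  | .ext .. | .cont .. => True
  | _ => False

lemma Ty.IsOpNode.applyOps {t : Ty} (ht : t.IsOpNode) (ops : List Op) :
    (applyOps t ops).IsOpNode := by
  induction ops generalizing t with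
  | nil => exact ht
  | cons p ops ih => exact ih (by obtain ⟨_ | _, _, _⟩ := p <;> trivial)

lemma Ty.isOpNode_applyOps_append_cons (t : Ty) (ops : List Op) (p : Op) (ops' : List Op) :
    (applyOps t (ops ++ p :: ops')).IsOpNode := by
  rw [applyOps_append]
  exact Ty.IsOpNode.applyOps (by obtain ⟨_ | _, _, _⟩ := p <;> trivial) ops'

lemma Red.of_arrow {t u v : Ty} (h : Red (.arrow t u) v) :
    (∃ t', Red t t') ∨ ∃ u', Red u u' := by
  generalize hs : Ty.arrow t u = s at h
  cases h with
  | arrowL h => cases hs; exact .inl ⟨_, h⟩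
  | arrowR h => cases hs; exact .inr ⟨_, h⟩
  | contFold =>
    exact (hs ▸ Ty.IsOpNode.applyOps (t := .cont ..) trivial _ : (Ty.arrow t u).IsOpNode).elim
  | extFold _ =>
    exact (hs ▸ Ty.IsOpNode.applyOps (t := .ext ..) trivial _ : (Ty.arrow t u).IsOpNode).elim
  | cancelCE _ | cancelEC _ =>
    exact (hs ▸ Ty.isOpNode_applyOps_append_cons .. : (Ty.arrow t u).IsOpNode).elim
  | _ => cases hs

lemma Red.of_record {F : Fields} {v : Ty} (h : Red (Ty.record F) v) :
    ∃ p ∈ F, ∃ t', Red p.2 t' := by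
  generalize hs : Ty.record F = s at h
  cases h with
  | rcdField h =>
    obtain rfl := Ty.record_injective hs
    exact ⟨_, List.mem_append_right _ List.mem_cons_self, _, h⟩
  | contFold =>
    exact (hs ▸ Ty.IsOpNode.applyOps (t := .cont ..) trivial _ : (Ty.record F).IsOpNode).elim
  | extFold _ =>
    exact (hs ▸ Ty.IsOpNode.applyOps (t := .ext ..) trivial _ : (Ty.record F).IsOpNode).elim
  | cancelCE _ | cancelEC _ =>
    exact (hs ▸ Ty.isOpNode_applyOps_append_cons .. : (Ty.record F).IsOpNode).elim
  | _ => cases hs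

lemma NF.arrow {t u : Ty} (ht : NF t) (hu : NF u) : NF (.arrow t u) := fun _ h =>
  h.of_arrow.elim (fun ⟨_, h⟩ => ht _ h) (fun ⟨_, h⟩ => hu _ h)

lemma NF.record {F : Fields} (hF : ∀ p ∈ F, NF p.2) : NF (Ty.record F) := fun _ h =>
  let ⟨p, hp, _, h⟩ := h.of_record
  hF p hp _ h

/-- the type inference algorithm always returns types in normal form. -/
theorem infer_normal (K : KEnv) (Γ : TEnv) (M : Tm) (K' : KEnv) (S : Subst) (τ : Ty)
    (h : Infer K Γ M K' S τ) : NF τ := by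
  induction h using Infer.rec (motive_2 := fun _ _ _ _ _ F _ => ∀ p ∈ F, NF p.2) with
  | var | app | sel | modif | contr | extend => exact nf_norm _
  | abs _ _ ih => exact (nf_norm _).arrow ih
  | letin _ _ _ _ ih => exact ih
  | rcd _ ih => exact NF.record ih
  | nil _ hp => cases hp
  | cons _ _ _ ih p hp =>
    rcases List.mem_cons.mp hp with rfl | hp
    exacts [nf_norm _, ih p hp]

end ExtRec
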